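/- Let Z be a real-valued random variable on a probability space whose law is atomless (has no atoms), and let S be a measurable subset of ℝ with P(Z ∈ S) > 0. Define the conditional survival p-value p(t) := P(Z ≥ t and Z ∈ S) / P(Z ∈ S). Then for every α ∈ (0, 1), P(p(Z) ≤ α and Z ∈ S) = α · P(Z ∈ S); equivalently, conditional on the event {Z ∈ S}, the random variable p(Z) is uniformly distributed on (0, 1). -/

import Mathlib

open MeasureTheory Set Filter Topology ProbabilityTheory
open scoped ENNReal

/-!
Conditioning the law of `Z` on `S` gives an atomless probability measure `ν` on `ℝ`, and
`p t = ν [t, ∞)`. By dominated convergence `p` is continuous; it is antitone with limits `1` at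
`-∞` and `0` at `+∞`. Hence `{p ≤ α}` is a closed half-line `[t₀, ∞)` with `p t₀ = α`, whose
`ν`-mass is therefore `α`.
-/

theorem exists_eq_and_setOf_le_eq_Ici {α β : Type*} [ConditionallyCompleteLinearOrder α]
    [TopologicalSpace α] [OrderTopology α] [DenselyOrdered α] [LinearOrder β] [TopologicalSpace β]
    [OrderClosedTopology β] {f : α → β} (hf : Continuous f) (hf_anti : Antitone f) {a b : α} {c : β}
    (ha : c < f a) (hb : f b ≤ c) : ∃ t, f t = c ∧ {x | f x ≤ c} = Ici t := by
  set s := {x | f x ≤ c}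
  have hs : IsClosed s := isClosed_le hf continuous_const
  have hlt : ∀ x ∈ s, a < x := fun x hx => lt_of_not_ge fun hxa => ha.not_ge ((hf_anti hxa).trans hx)
  have hbdd : BddBelow s := ⟨a, fun x hx => (hlt x hx).le⟩
  have hmem : sInf s ∈ s := hs.csInf_mem ⟨b, hb⟩ hbdd
  refine ⟨sInf s, le_antisymm hmem ?_, ?_⟩
  · have hIio : Iio (sInf s) ⊆ {x | c ≤ f x} := fun x hx =>
      le_of_lt (lt_of_not_ge fun h => (not_le.2 hx) (csInf_le hbdd h))
    have := closure_minimal hIio (isClosed_le continuous_const hf)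
    rw [closure_Iio' ⟨a, hlt _ hmem⟩] at this
    exact this (mem_Iic.2 le_rfl)
  · ext x
    exact ⟨fun hx => csInf_le hbdd hx, fun hx => (hf_anti hx).trans hmem⟩

namespace MeasureTheory

variable {μ : Measure ℝ}

theorem continuous_measureReal_Ici [IsFiniteMeasure μ] [NullSingletonClass μ] :
    Continuous fun t => μ.real (Ici t) := by
  -- `t ↦ 𝟙[t, ∞) x` is continuous at `t₀` unless `x = t₀`, which is a null event.
  simp_rw [← integral_indicator_one measurableSet_Ici]
  refine continuous_iff_continuousAt.2 fun t₀ => continuousAt_of_dominated (bound := 1) ?_ ?_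
    (integrable_const 1) ?_
  · exact Eventually.of_forall fun t =>
      (measurable_one.indicator measurableSet_Ici).aestronglyMeasurable
  · refine Eventually.of_forall fun t => Eventually.of_forall fun x => ?_
    by_cases h : t ≤ x <;> simp [indicator, h]
  · filter_upwards [measure_singleton (μ := μ) t₀ |> compl_mem_ae_iff.2] with x hx
    rcases lt_or_gt_of_ne (show x ≠ t₀ from hx) with h | h
    · refine continuousAt_const.congr (f := fun _ => (0 : ℝ)) ?_
      filter_upwards [lt_mem_nhds h] with t ht
      simp [indicator, not_le.2 ht]
    · refine continuousAt_const.congr (f := fun _ => (1 : ℝ)) ?_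
      filter_upwards [gt_mem_nhds h] with t ht
      simp [indicator, ht.le]

theorem antitone_measureReal_Ici [IsFiniteMeasure μ] : Antitone fun t => μ.real (Ici t) :=
  fun _ _ h => measureReal_mono (Ici_subset_Ici.2 h)

theorem tendsto_measure_Ici_atTop [IsFiniteMeasure μ] :
    Tendsto (fun t => μ (Ici t)) atTop (𝓝 0) := by
  have h : ⋂ t : ℝ, Ici t = ∅ :=
    eq_empty_of_forall_notMem fun x hx => (lt_add_one x).not_ge (mem_iInter.1 hx (x + 1))
  rw [← measure_empty (μ := μ), ← h]
  exact tendsto_measure_iInter_atTop (fun _ => measurableSet_Ici.nullMeasurableSet)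
    antitone_Ici ⟨0, measure_ne_top _ _⟩

theorem measure_setOf_measureReal_Ici_le [IsProbabilityMeasure μ] [NullSingletonClass μ] {α : ℝ}
    (h0 : 0 < α) (h1 : α < 1) : μ {t | μ.real (Ici t) ≤ α} = ENNReal.ofReal α := by
  obtain ⟨a, ha⟩ : ∃ a, α < μ.real (Ici a) := by
    have := (ENNReal.tendsto_toReal (measure_ne_top μ univ)).comp (tendsto_measure_Ici_atBot μ)
    rw [← measureReal_def, probReal_univ] at this
    exact (this.eventually (lt_mem_nhds h1)).exists
  obtain ⟨b, hb⟩ : ∃ b, μ.real (Ici b) ≤ α := by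
    have := (ENNReal.tendsto_toReal ENNReal.zero_ne_top).comp (tendsto_measure_Ici_atTop (μ := μ))
    exact (this.eventually (ge_mem_nhds h0)).exists
  obtain ⟨t, ht, hset⟩ := exists_eq_and_setOf_le_eq_Ici continuous_measureReal_Ici
    antitone_measureReal_Ici ha hb
  rw [hset, ← ht, ofReal_measureReal]

end MeasureTheory

/-- Conditional probability integral transform: if the law of `Z` is atomless and
`S` is a measurable set with `P(Z ∈ S) > 0`, then the conditional survival p-value
`p(t) = P(Z ≥ t ∧ Z ∈ S)/P(Z ∈ S)` satisfies
`P(p(Z) ≤ α ∧ Z ∈ S) = α · P(Z ∈ S)` for all `α ∈ (0,1)`. -/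
theorem stmt_0 {Ω : Type*} [MeasurableSpace Ω] (P : Measure Ω) [IsProbabilityMeasure P]
    (Z : Ω → ℝ) (hZ : Measurable Z) (hatom : ∀ x : ℝ, P.map Z {x} = 0)
    (S : Set ℝ) (hS : MeasurableSet S) (hpos : 0 < P {ω | Z ω ∈ S})
    (p : ℝ → ℝ)
    (hp : ∀ t : ℝ, p t = (P {ω | t ≤ Z ω ∧ Z ω ∈ S}).toReal / (P {ω | Z ω ∈ S}).toReal)
    (α : ℝ) (hα : α ∈ Set.Ioo (0 : ℝ) 1) :
    P {ω | p (Z ω) ≤ α ∧ Z ω ∈ S} = ENNReal.ofReal α * P {ω | Z ω ∈ S} := by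
  set ν := (P.map Z)[|S]
  have hZS : P.map Z S = P {ω | Z ω ∈ S} := Measure.map_apply hZ hS
  have : IsProbabilityMeasure ν := cond_isProbabilityMeasure (hZS ▸ hpos.ne')
  have : NullSingletonClass ν := ⟨fun x => cond_absolutelyContinuous (hatom x)⟩
  have hpν : p = fun t => ν.real (Ici t) := by
    funext t
    rw [hp, measureReal_def, cond_apply hS, inter_comm,
      Measure.map_apply hZ (measurableSet_Ici.inter hS), ← hZS, ENNReal.toReal_mul,
      ENNReal.toReal_inv, inv_mul_eq_div]
    rfl
  have hmeas : MeasurableSet {t | p t ≤ α} :=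
    hpν ▸ measurableSet_le (continuous_measureReal_Ici (μ := ν)).measurable measurable_const
  calc P {ω | p (Z ω) ≤ α ∧ Z ω ∈ S} = P.map Z (S ∩ {t | p t ≤ α}) := by
        rw [inter_comm, Measure.map_apply hZ (hmeas.inter hS)]
        rfl
    _ = ν {t | p t ≤ α} * P.map Z S := (cond_mul_eq_inter hS _ _).symm
    _ = ENNReal.ofReal α * P {ω | Z ω ∈ S} := by
        rw [hpν, measure_setOf_measureReal_Ici_le hα.1 hα.2, hZS]
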